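/- arXiv:math/0605333 — 5 statements merged into one kernel-verified Lean document; each statement's English description precedes it below -/
import Mathlib

section
/- With the same definitions, the quantities b(j)_i satisfy the quadratic relations (b(k)_i - b(k-1)_i)·b(1)_j = (b(j)_{i-k+j} - b(j-1)_{i-k+j})·b(1)_k - (b(j)_{k+j-1} - b(j-1)_{k+j-1})·b(1)_{i-k+1} for all admissible indices i, j, k. -/
open Finset

/-- The quadratic quantities `b(j)_i` attached to the coefficients `a` of a
polynomial of degree `n` (with `a m = 0` for `m < 0`). -/
noncomputable def sturmB {K : Type*} [Field K] (a : ℤ → K) (n : ℕ) (j : ℕ) (i : ℤ) : K :=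
  (n : K) * ∑ p ∈ range j, ((i : K) - 2 * p) * a ((n : ℤ) - p) * a ((n : ℤ) - i + p)
    - (j : K) * ((n : K) - (i : K) + (j : K)) * a ((n : ℤ) - j) * a ((n : ℤ) + j - i)

lemma sturmB_one {K : Type*} [Field K] (a : ℤ → K) (n : ℕ) (m : ℤ) :
    sturmB a n 1 m = (n : K) * (m : K) * a (n : ℤ) * a ((n : ℤ) - m)
      - ((n : K) - m + 1) * a ((n : ℤ) - 1) * a ((n : ℤ) - m + 1) := by
  simp only [sturmB, Finset.sum_range_one]
  push_cast
  ring_nf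

lemma sturmB_succ_sub {K : Type*} [Field K] (a : ℤ → K) (n j : ℕ) (m : ℤ) :
    sturmB a n (j+1) m - sturmB a n j m =
      ((n : K) - j) * ((m : K) - j) * a ((n : ℤ) - j) * a ((n : ℤ) - m + j)
      - ((j : K) + 1) * ((n : K) - m + j + 1) * a ((n : ℤ) - j - 1) * a ((n : ℤ) - m + j + 1) := by
  simp only [sturmB, Finset.sum_range_succ]
  push_cast
  rw [show (n:ℤ) + ((j:ℤ)+1) - m = (n:ℤ) - m + j + 1 from by ring,
    show (n:ℤ) - ((j:ℤ)+1) = (n:ℤ) - j - 1 from by ring,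
    show (n:ℤ) + (j:ℤ) - m = (n:ℤ) - m + j from by ring]
  ring

/-- The quadratic relations (1.7.1):
`(b(k)_i - b(k-1)_i)·b(1)_j = (b(j)_{i-k+j} - b(j-1)_{i-k+j})·b(1)_k
  - (b(j)_{k+j-1} - b(j-1)_{k+j-1})·b(1)_{i-k+1}` for admissible indices. -/
theorem sturmB_quadratic_relations {K : Type*} [Field K] [CharZero K] (n : ℕ) (hn : 0 < n)
    (a : ℤ → K) (ha : a (n : ℤ) ≠ 0) (haneg : ∀ m : ℤ, m < 0 → a m = 0) :
    ∀ j k : ℕ, 2 ≤ j → 2 ≤ k → ∀ i : ℤ,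
      2 * (k : ℤ) - 2 ≤ i → 2 * (j : ℤ) - 2 ≤ i - k + j → 2 * (j : ℤ) - 2 ≤ (k : ℤ) + j - 1 →
      (sturmB a n k i - sturmB a n (k - 1) i) * sturmB a n 1 (j : ℤ)
        = (sturmB a n j (i - k + j) - sturmB a n (j - 1) (i - k + j)) * sturmB a n 1 (k : ℤ)
          - (sturmB a n j ((k : ℤ) + j - 1) - sturmB a n (j - 1) ((k : ℤ) + j - 1))
            * sturmB a n 1 (i - k + 1) := by
  rintro j k hj hk i _ _ _
  obtain ⟨jj, hjj, rfl⟩ : ∃ jj, 1 ≤ jj ∧ j = jj + 1 := ⟨j - 1, by omega, by omega⟩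
  obtain ⟨kk, hkk, rfl⟩ : ∃ kk, 1 ≤ kk ∧ k = kk + 1 := ⟨k - 1, by omega, by omega⟩
  have h1 : jj + 1 - 1 = jj := rfl
  have h2 : kk + 1 - 1 = kk := rfl
  rw [h1, h2, sturmB_succ_sub, sturmB_succ_sub, sturmB_succ_sub,
    sturmB_one, sturmB_one, sturmB_one]
  rw [show (n:ℤ) - (i - ((kk+1:ℕ):ℤ) + ((jj+1:ℕ):ℤ)) + (jj:ℤ) + 1 = (n:ℤ) - i + kk + 1 from by push_cast; ring,
    show (n:ℤ) - (i - ((kk+1:ℕ):ℤ) + ((jj+1:ℕ):ℤ)) + (jj:ℤ) = (n:ℤ) - i + kk from by push_cast; ring,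
    show (n:ℤ) - (((kk+1:ℕ):ℤ) + ((jj+1:ℕ):ℤ) - 1) + (jj:ℤ) + 1 = (n:ℤ) - (kk:ℤ) from by push_cast; ring,
    show (n:ℤ) - (((kk+1:ℕ):ℤ) + ((jj+1:ℕ):ℤ) - 1) + (jj:ℤ) = (n:ℤ) - (kk:ℤ) - 1 from by push_cast; ring,
    show (n:ℤ) - ((jj+1:ℕ):ℤ) + 1 = (n:ℤ) - (jj:ℤ) from by push_cast; ring,
    show (n:ℤ) - ((jj+1:ℕ):ℤ) = (n:ℤ) - (jj:ℤ) - 1 from by push_cast; ring,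
    show (n:ℤ) - ((kk+1:ℕ):ℤ) + 1 = (n:ℤ) - (kk:ℤ) from by push_cast; ring,
    show (n:ℤ) - ((kk+1:ℕ):ℤ) = (n:ℤ) - (kk:ℤ) - 1 from by push_cast; ring,
    show (n:ℤ) - (i - ((kk+1:ℕ):ℤ) + 1) + 1 = (n:ℤ) - i + kk + 1 from by push_cast; ring,
    show (n:ℤ) - (i - ((kk+1:ℕ):ℤ) + 1) = (n:ℤ) - i + kk from by push_cast; ring]
  push_cast
  ring
end

section
/- Plücker-type identity (B_n): Let v_1,...,v_n be n vectors of dimension n-2 over a commutative ring, and for i < j let V_{ij} be the determinant of the (n-2)×(n-2) matrix with rows v_1,...,v̂_i,...,v̂_j,...,v_n. Then for each i < n-2, V_{n-2,n-1}·V_{i,n} - V_{n-2,n}·V_{i,n-1} + V_{n-1,n}·V_{i,n-2} = 0. -/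
/-- The increasing embedding `Fin (m+2) → Fin (m+4)` omitting the two indices `i < j`. -/
def omitTwo4 (m i j : ℕ) (hij : i < j) (hj : j < m + 4) : Fin (m + 2) → Fin (m + 4) :=
  fun p => (⟨j, hj⟩ : Fin (m + 4)).succAbove ((⟨i, by omega⟩ : Fin (m + 3)).succAbove p)

lemma succAbove_val' {n : ℕ} (j : Fin (n+1)) (p : Fin n) :
    ((j.succAbove p : Fin (n+1)) : ℕ) = if (p:ℕ) < (j:ℕ) then (p:ℕ) else (p:ℕ)+1 := by
  rcases lt_or_ge (p:ℕ) (j:ℕ) with h | h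
  · rw [if_pos h, Fin.succAbove_of_castSucc_lt _ _ (by simpa [Fin.lt_def] using h)]
    simp
  · rw [if_neg (by omega), Fin.succAbove_of_le_castSucc _ _ (by simpa [Fin.le_def] using h)]
    simp

lemma omitTwo4_val (m a b : ℕ) (hab : a < b) (hb : b < m+4) (p : Fin (m+2)) :
    ((omitTwo4 m a b hab hb p : Fin (m+4)) : ℕ)
      = if (p:ℕ) < a then (p:ℕ) else if (p:ℕ)+1 < b then (p:ℕ)+1 else (p:ℕ)+2 := by
  rw [omitTwo4, succAbove_val', succAbove_val']
  simp only [Fin.val_mk]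
  split_ifs <;> omega

open Matrix Finset in
lemma lemA {R : Type*} [CommRing R] (N : ℕ) (c : Fin (N+1) → R) (x : Fin (N+2) → Fin (N+1) → R) :
    ∑ k : Fin (N+2), (-1:R)^(k:ℕ) * (∑ q, c q * x k q) *
      Matrix.det (Matrix.of fun p q => x (k.succAbove p) q) = 0 := by
  set B : Matrix (Fin (N+2)) (Fin (N+2)) R :=
    Matrix.of fun k j => Fin.cases (∑ q, c q * x k q) (fun q => x k q) j with hBdef
  have hB : B.det = ∑ k : Fin (N+2), (-1:R)^(k:ℕ) * (∑ q, c q * x k q) *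
      Matrix.det (Matrix.of fun p q => x (k.succAbove p) q) := by
    rw [Matrix.det_succ_column_zero]
    refine Finset.sum_congr rfl fun k _ => ?_
    congr 1
  have hB0 : B.det = 0 := by
    set c' : Fin (N+2) → R := Fin.cases 0 c with hc'
    have h1 : B.updateCol 0 (fun k => ∑ j, c' j • B k j) = B := by
      ext k j
      rcases eq_or_ne j 0 with rfl | hj
      · rw [Matrix.updateCol_self]
        rw [Fin.sum_univ_succ]
        simp [B, c']
      · rw [Matrix.updateCol_ne hj]
    have h2 := Matrix.det_updateCol_sum B 0 c'
    rw [h1] at h2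
    simpa [c'] using h2
  rw [← hB, hB0]

set_option maxHeartbeats 1000000 in
open Matrix Finset in
/-- Plücker-type identity `(B_n)` (with `n = m+4 ≥ 4`): for `n` vectors `v₁,…,vₙ` of
dimension `n-2` and `V_{ij}` the `(n-2)×(n-2)` determinant of the rows omitting
`vᵢ, vⱼ`, one has, for each `i < n-2`,
`V_{n-2,n-1}·V_{i,n} - V_{n-2,n}·V_{i,n-1} + V_{n-1,n}·V_{i,n-2} = 0`
(here in 0-based indexing: `i < m+1` and the distinguished indices are `m+1, m+2, m+3`). -/
theorem pluecker_B {R : Type*} [CommRing R] (m : ℕ) (v : Fin (m + 4) → Fin (m + 2) → R)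
    (i : ℕ) (hi : i < m + 1) :
    letI V : (a b : ℕ) → a < b → b < m + 4 → R := fun a b hab hb =>
      Matrix.det (Matrix.of fun p q => v (omitTwo4 m a b hab hb p) q)
    V (m + 1) (m + 2) (by omega) (by omega) * V i (m + 3) (by omega) (by omega)
      - V (m + 1) (m + 3) (by omega) (by omega) * V i (m + 2) (by omega) (by omega)
      + V (m + 2) (m + 3) (by omega) (by omega) * V i (m + 1) (by omega) (by omega) = 0 := by
  -- abbreviations for the six determinants
  set D12 : R := Matrix.det (Matrix.of fun p q => v (omitTwo4 m (m+1) (m+2) (by omega) (by omega) p) q) with hD12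
  set D13 : R := Matrix.det (Matrix.of fun p q => v (omitTwo4 m (m+1) (m+3) (by omega) (by omega) p) q) with hD13
  set D23 : R := Matrix.det (Matrix.of fun p q => v (omitTwo4 m (m+2) (m+3) (by omega) (by omega) p) q) with hD23
  set Di1 : R := Matrix.det (Matrix.of fun p q => v (omitTwo4 m i (m+1) (by omega) (by omega) p) q) with hDi1
  set Di2 : R := Matrix.det (Matrix.of fun p q => v (omitTwo4 m i (m+2) (by omega) (by omega) p) q) with hDi2
  set Di3 : R := Matrix.det (Matrix.of fun p q => v (omitTwo4 m i (m+3) (by omega) (by omega) p) q) with hDi3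
  show D12 * Di3 - D13 * Di2 + D23 * Di1 = 0
  -- the matrix with variable row `y` in slot `m`
  set A : (Fin (m+2) → R) → Matrix (Fin (m+2)) (Fin (m+2)) R := fun y =>
    Matrix.of fun p q =>
      if (p:ℕ) < m then v ⟨if (p:ℕ) < i then (p:ℕ) else (p:ℕ)+1, by split_ifs <;> omega⟩ q
      else if (p:ℕ) = m then y q else v ⟨m+3, by omega⟩ q with hAdef
  set c : Fin (m+2) → R := fun q => (-1:R)^(m+(q:ℕ)) *
    Matrix.det ((A 0).submatrix (Fin.succAbove ⟨m, by omega⟩) (Fin.succAbove q)) with hc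
  have hArow : ∀ (y : Fin (m+2) → R) (q : Fin (m+2)),
      (A y).submatrix (Fin.succAbove ⟨m, by omega⟩) (Fin.succAbove q)
        = (A 0).submatrix (Fin.succAbove ⟨m, by omega⟩) (Fin.succAbove q) := by
    intro y q
    ext p r
    have hp : ((Fin.succAbove ⟨m, by omega⟩ p : Fin (m+2)) : ℕ)
        = if (p:ℕ) < m then (p:ℕ) else (p:ℕ)+1 := succAbove_val' _ _
    simp only [Matrix.submatrix_apply, hAdef, Matrix.of_apply, hp]
    split_ifs <;>
      first
        | rfl
        | omega
        | (exact congrFun (congrArg v (Fin.ext (by omega))) _)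
  have hA : ∀ y : Fin (m+2) → R, Matrix.det (A y) = ∑ q, c q * y q := by
    intro y
    rw [Matrix.det_succ_row (A y) ⟨m, by omega⟩]
    refine Finset.sum_congr rfl fun q _ => ?_
    rw [hArow y q]
    have : (A y) ⟨m, by omega⟩ q = y q := by
      simp [hAdef]
    rw [this, hc]
    ring
  have hrowm : ∀ y : Fin (m+2) → R, (A y) ⟨m, by omega⟩ = y := by
    intro y; funext q; simp [hAdef]
  -- the instance of lemA
  have hmain : ∑ k : Fin (m+3), (-1:R)^(k:ℕ) *
      Matrix.det (A fun q => v (Fin.castSucc k) q) *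
      Matrix.det (Matrix.of fun p q => v (Fin.castSucc (k.succAbove p)) q) = 0 := by
    have h := lemA (m+1) c (fun k q => v (Fin.castSucc k) q)
    refine Eq.trans (Finset.sum_congr rfl fun k _ => ?_) h
    rw [hA]
  -- identification of the second factors
  have hsec : ∀ (a : ℕ) (ha : a < m+3),
      (Matrix.of fun p q => v (Fin.castSucc ((⟨a, ha⟩ : Fin (m+3)).succAbove p)) q)
        = Matrix.of fun p q => v (omitTwo4 m a (m+3) (by omega) (by omega) p) q := by
    intro a ha
    ext p q
    refine congrFun (congrArg v (Fin.ext ?_)) q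
    rw [Fin.coe_castSucc, succAbove_val', omitTwo4_val]
    simp only [Fin.val_mk]
    split_ifs <;> omega
  -- vanishing terms
  have hzero : ∀ k : Fin (m+3), (k:ℕ) ≠ i → (k:ℕ) ≠ m+1 → (k:ℕ) ≠ m+2 →
      Matrix.det (A fun q => v (Fin.castSucc k) q) = 0 := by
    intro k h1 h2 h3
    have hk : (k:ℕ) < m+1 := by have := k.isLt; omega
    refine Matrix.det_zero_of_row_eq
      (i := (⟨if (k:ℕ) < i then (k:ℕ) else (k:ℕ)-1, by split_ifs <;> omega⟩ : Fin (m+2)))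
      (j := ⟨m, by omega⟩) ?_ ?_
    · apply Fin.ne_of_val_ne
      simp only [Fin.val_mk]
      split_ifs <;> omega
    · rw [hrowm]
      funext q
      simp only [hAdef, Matrix.of_apply, Fin.val_mk]
      split_ifs <;>
        first
          | rfl
          | omega
          | (refine congrFun (congrArg v (Fin.ext ?_)) q
             simp only [Fin.val_mk, Fin.coe_castSucc]
             omega)
  -- the term at k = i
  have hAi : Matrix.det (A fun q => v (Fin.castSucc (⟨i, by omega⟩ : Fin (m+3))) q)
      = (-1:R)^(m-i) * D12 := by
    have e2 : D12 = ∑ q : Fin (m+2), (-1:R)^(i+(q:ℕ)) * v (Fin.castSucc (⟨i, by omega⟩ : Fin (m+3))) q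
        * Matrix.det ((A 0).submatrix (Fin.succAbove ⟨m, by omega⟩) (Fin.succAbove q)) := by
      rw [hD12, Matrix.det_succ_row _ ⟨i, by omega⟩]
      refine Finset.sum_congr rfl fun q _ => ?_
      congr 1
      · congr 1
        refine congrFun (congrArg v (Fin.ext ?_)) q
        rw [omitTwo4_val]
        simp only [Fin.val_mk, Fin.coe_castSucc]
        split_ifs <;> omega
      · congr 1
        ext p r
        have h2 : ((Fin.succAbove (⟨m, by omega⟩ : Fin (m+2)) p : Fin (m+2)) : ℕ)
            = if (p:ℕ) < m then (p:ℕ) else (p:ℕ)+1 := succAbove_val' _ _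
        simp only [Matrix.submatrix_apply, hAdef, Matrix.of_apply, h2]
        split_ifs with hc1 hc2 hc3 <;>
          first
            | omega
            | (refine congrFun (congrArg v (Fin.ext ?_)) _
               rw [omitTwo4_val, succAbove_val']
               simp only [Fin.val_mk]
               split_ifs <;> omega)
    rw [hA, e2, Finset.mul_sum]
    refine Finset.sum_congr rfl fun q _ => ?_
    simp only [hc]
    have hp : ((-1:R))^(m+(q:ℕ)) = (-1)^(m-i) * (-1)^(i+(q:ℕ)) := by
      rw [← pow_add]; congr 1; omega
    rw [hp]; ring
  -- the term at k = m+1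
  have hA1 : Matrix.det (A fun q => v (Fin.castSucc (⟨m+1, by omega⟩ : Fin (m+3))) q) = Di2 := by
    rw [hDi2]
    congr 1
    ext p q
    simp only [hAdef, Matrix.of_apply, Fin.val_mk]
    split_ifs <;>
      (refine congrFun (congrArg v (Fin.ext ?_)) q
       rw [omitTwo4_val]
       simp only [Fin.val_mk, Fin.coe_castSucc]
       split_ifs <;> omega)
  -- the term at k = m+2
  have hA2 : Matrix.det (A fun q => v (Fin.castSucc (⟨m+2, by omega⟩ : Fin (m+3))) q) = Di1 := by
    rw [hDi1]
    congr 1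
    ext p q
    simp only [hAdef, Matrix.of_apply, Fin.val_mk]
    split_ifs <;>
      (refine congrFun (congrArg v (Fin.ext ?_)) q
       rw [omitTwo4_val]
       simp only [Fin.val_mk, Fin.coe_castSucc]
       split_ifs <;> omega)
  -- split the sum
  set F : Fin (m+3) → R := fun k => (-1:R)^(k:ℕ) *
      Matrix.det (A fun q => v (Fin.castSucc k) q) *
      Matrix.det (Matrix.of fun p q => v (Fin.castSucc (k.succAbove p)) q) with hF
  have hsum0 : ∑ k : Fin (m+3), F k = 0 := hmain
  have hFzero : ∀ k ∈ Finset.univ, k ∉ ({⟨i, by omega⟩, ⟨m+1, by omega⟩, ⟨m+2, by omega⟩} :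
      Finset (Fin (m+3))) → F k = 0 := by
    intro k _ hk
    simp only [Finset.mem_insert, Finset.mem_singleton, not_or, Fin.ext_iff, Fin.val_mk] at hk
    simp only [hF]
    rw [hzero k hk.1 hk.2.1 hk.2.2]
    ring
  have hsplit := Finset.sum_subset (Finset.subset_univ
    ({⟨i, by omega⟩, ⟨m+1, by omega⟩, ⟨m+2, by omega⟩} : Finset (Fin (m+3)))) hFzero
  rw [hsum0] at hsplit
  have hne1 : (⟨i, by omega⟩ : Fin (m+3)) ∉
      ({⟨m+1, by omega⟩, ⟨m+2, by omega⟩} : Finset (Fin (m+3))) := by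
    simp only [Finset.mem_insert, Finset.mem_singleton, Fin.ext_iff, Fin.val_mk]
    omega
  have hne2 : (⟨m+1, by omega⟩ : Fin (m+3)) ∉ ({⟨m+2, by omega⟩} : Finset (Fin (m+3))) := by
    simp only [Finset.mem_singleton, Fin.ext_iff, Fin.val_mk]
    omega
  rw [Finset.sum_insert hne1, Finset.sum_insert hne2, Finset.sum_singleton] at hsplit
  -- evaluate the three terms
  have eI : F ⟨i, by omega⟩ = (-1:R)^i * ((-1:R)^(m-i) * D12) * Di3 := by
    show (-1:R)^i * Matrix.det (A fun q => v (Fin.castSucc (⟨i, by omega⟩ : Fin (m+3))) q) *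
      Matrix.det (Matrix.of fun p q =>
        v (Fin.castSucc ((⟨i, by omega⟩ : Fin (m+3)).succAbove p)) q) = _
    rw [hAi, hsec i (by omega), ← hDi3]
  have e1 : F ⟨m+1, by omega⟩ = (-1:R)^(m+1) * Di2 * D13 := by
    show (-1:R)^(m+1) * Matrix.det (A fun q => v (Fin.castSucc (⟨m+1, by omega⟩ : Fin (m+3))) q) *
      Matrix.det (Matrix.of fun p q =>
        v (Fin.castSucc ((⟨m+1, by omega⟩ : Fin (m+3)).succAbove p)) q) = _
    rw [hA1, hsec (m+1) (by omega), ← hD13]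
  have e2 : F ⟨m+2, by omega⟩ = (-1:R)^(m+2) * Di1 * D23 := by
    show (-1:R)^(m+2) * Matrix.det (A fun q => v (Fin.castSucc (⟨m+2, by omega⟩ : Fin (m+3))) q) *
      Matrix.det (Matrix.of fun p q =>
        v (Fin.castSucc ((⟨m+2, by omega⟩ : Fin (m+3)).succAbove p)) q) = _
    rw [hA2, hsec (m+2) (by omega), ← hD23]
  rw [eI, e1, e2] at hsplit
  -- final algebra
  have hpow1 : (-1:R)^i * (-1:R)^(m-i) = (-1:R)^m := by
    rw [← pow_add]; congr 1; omega
  have hsq : (-1:R)^m * (-1:R)^m = 1 := by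
    rw [← pow_add, show m+m = 2*m by ring, pow_mul]; norm_num
  have key2 : (-1:R)^m * (D12 * Di3 - D13 * Di2 + D23 * Di1) = 0 := by
    linear_combination hsplit - D12 * Di3 * hpow1
  have expand : D12 * Di3 - D13 * Di2 + D23 * Di1
      = (-1:R)^m * ((-1:R)^m * (D12 * Di3 - D13 * Di2 + D23 * Di1)) := by
    rw [← mul_assoc, hsq, one_mul]
  rw [expand, key2, mul_zero]
end

section
/- For the Sturm sequence of f, the second member f_2 (the negative of the remainder of f divided by f') satisfies f_2(x) = -(1/(n² a_n)) · Σ_{i=0}^{n-2} b(1)_{i+2} x^{n-2-i}, where b(1)_i = n·i·a_n·a_{n-i} - (n-i+1)·a_{n-1}·a_{n-i+1}. -/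
open Finset Polynomial

noncomputable section

/-- The coefficients of a polynomial, extended by `0` to negative indices. -/
def acoef {K : Type*} [Field K] (f : K[X]) : ℤ → K :=
  fun m => if 0 ≤ m then f.coeff m.toNat else 0

/-- `b(1)_i = n·i·aₙ·a_{n-i} - (n-i+1)·a_{n-1}·a_{n-i+1}`. -/
def sturmB1 {K : Type*} [Field K] (a : ℤ → K) (n : ℕ) (i : ℤ) : K :=
  (n : K) * (i : K) * a (n : ℤ) * a ((n : ℤ) - i)
    - ((n : K) - (i : K) + 1) * a ((n : ℤ) - 1) * a ((n : ℤ) - i + 1)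

/-- The second member of the Sturm sequence,
`f₂ = (x/n + a_{n-1}/(n²aₙ))·f' - f` (the negative of the remainder of `f` by `f'`),
equals `-(1/(n²aₙ)) · Σ_{i=0}^{n-2} b(1)_{i+2} x^{n-2-i}`. -/
theorem sturm_second_member {K : Type*} [Field K] [CharZero K] (f : K[X]) (n : ℕ)
    (hn : 2 ≤ n) (hdeg : f.degree = (n : ℕ)) :
    (C (1 / (n : K)) * X + C (acoef f ((n : ℤ) - 1) / ((n : K) ^ 2 * acoef f (n : ℤ))))
        * derivative f - f
      = -C (1 / ((n : K) ^ 2 * acoef f (n : ℤ)))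
          * ∑ i ∈ range (n - 1), C (sturmB1 (acoef f) n ((i : ℤ) + 2)) * X ^ (n - 2 - i) := by
  have hn0 : (n : K) ≠ 0 := Nat.cast_ne_zero.mpr (by omega)
  have han : f.coeff n ≠ 0 := coeff_ne_zero_of_eq_degree hdeg
  have hz : ∀ j, n < j → f.coeff j = 0 := fun j hj =>
    coeff_eq_zero_of_degree_lt (hdeg ▸ by exact_mod_cast hj)
  have ha1 : acoef f (n : ℤ) = f.coeff n := by simp [acoef]
  have ha2 : acoef f ((n : ℤ) - 1) = f.coeff (n - 1) := by
    unfold acoef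
    rw [if_pos (by omega)]
    congr 1
    omega
  have hb1 : ∀ k : ℕ, k ≤ n - 2 →
      sturmB1 (acoef f) n ((↑(n - 2 - k) : ℤ) + 2)
        = (n : K) * ((n : K) - k) * f.coeff n * f.coeff k
          - ((k : K) + 1) * f.coeff (n - 1) * f.coeff (k + 1) := by
    intro k hk
    have h1 : ((↑(n - 2 - k) : ℤ) + 2) = (n : ℤ) - k := by omega
    rw [h1]
    unfold sturmB1 acoef
    rw [if_pos (by omega), if_pos (by omega), if_pos (by omega), if_pos (by omega)]
    have e1 : ((n : ℤ) - ((n : ℤ) - k)).toNat = k := by omega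
    have e2 : ((n : ℤ) - ((n : ℤ) - k) + 1).toNat = k + 1 := by omega
    have e3 : ((n : ℤ)).toNat = n := by omega
    have e4 : ((n : ℤ) - 1).toNat = n - 1 := by omega
    rw [e1, e2, e3, e4]
    push_cast
    ring
  rw [ha1, ha2]
  ext k
  rw [add_mul, neg_mul, coeff_sub, coeff_add, coeff_neg, coeff_C_mul, coeff_C_mul, finset_sum_coeff]
  simp only [coeff_C_mul, coeff_X_pow]
  have hXd : (C (1/(n:K)) * X * derivative f).coeff k = (1/(n:K)) * (k : K) * f.coeff k := by
    cases k with
    | zero => simp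
    | succ m =>
      rw [show C (1/(n:K)) * X * derivative f = C (1/(n:K)) * (X * derivative f) by ring,
        coeff_C_mul, coeff_X_mul, coeff_derivative]
      push_cast
      ring
  rw [hXd, coeff_derivative]
  by_cases hk : k ≤ n - 2
  · rw [Finset.sum_eq_single_of_mem (n - 2 - k) (by simp; omega)
      (fun i hi hne => by rw [if_neg (by simp at hi; omega), mul_zero])]
    rw [if_pos (by omega), mul_one, hb1 k hk]
    field_simp
    ring
  · rw [Finset.sum_eq_zero (fun i hi => by rw [if_neg (by simp at hi; omega), mul_zero])]
    rcases Nat.lt_or_ge k n with h | h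
    · -- k = n - 1
      have hk1 : k = n - 1 := by omega
      subst hk1
      have : n - 1 + 1 = n := by omega
      rw [this]
      field_simp
      rw [Nat.cast_sub (by omega : 1 ≤ n)]
      push_cast
      ring
    · rcases Nat.eq_or_lt_of_le h with h' | h'
      · rw [← h', hz (n+1) (by omega)]
        field_simp
        ring
      · rw [hz k h', hz (k+1) (by omega)]
        simp


end
end

section
/- One step of the Sturm recursion in determinantal form: suppose f_{j-1}(x) = γ_{j-1}·Σ_{i≥0} c(j-1)_i x^{n-j+1-i} and f_j(x) = γ_j·Σ_{i≥0} c(j)_i x^{n-j-i} with c(j) = c(j)_0 ≠ 0. Then the negative remainder f_{j+1} of the division of f_{j-1} by f_j is f_{j+1}(x) = -(γ_{j-1}/c(j)²)·Σ_{i=2}^{n-j+1} Q(j)_i x^{n-j+1-i}, where Q(j)_i = c(j-1)_i·c(j)² - c(j-1)·c(j)·c(j)_i - c(j-1)_1·c(j)_{i-1}·c(j) + c(j-1)·c(j)_1·c(j)_{i-1}. -/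
open Finset Polynomial

/-- One step of the Sturm recursion in determinantal form (3.3):
if `f_{j-1} = γ' · Σ_i c'_i x^{n-j+1-i}` and `f_j = γ · Σ_i c_i x^{n-j-i}` with
`c₀ ≠ 0`, `γ ≠ 0` (and vanishing coefficients beyond the degree), then the negative
remainder `f_{j+1}` of the division of `f_{j-1}` by `f_j` equals
`-(γ'/c₀²) · Σ_{i=2}^{n-j+1} Q_i x^{n-j+1-i}`, where
`Q_i = c'_i·c₀² - c'₀·c₀·c_i - c'₁·c_{i-1}·c₀ + c'₀·c₁·c_{i-1}`. -/
theorem sturm_recursion_step {K : Type*} [Field K] [CharZero K] (n j : ℕ)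
    (hj : j + 1 ≤ n) (γ' γ : K) (c' c : ℕ → K)
    (hc0 : c 0 ≠ 0) (hγ : γ ≠ 0)
    (hc'top : ∀ i : ℕ, n - j + 1 < i → c' i = 0)
    (hctop : ∀ i : ℕ, n - j < i → c i = 0) :
    -((C γ' * ∑ i ∈ range (n - j + 2), C (c' i) * X ^ (n - j + 1 - i))
        % (C γ * ∑ i ∈ range (n - j + 1), C (c i) * X ^ (n - j - i)))
      = -C (γ' / (c 0) ^ 2)
          * ∑ i ∈ Finset.Icc 2 (n - j + 1),
              C (c' i * (c 0) ^ 2 - c' 0 * c 0 * c i - c' 1 * c (i - 1) * c 0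
                  + c' 0 * c 1 * c (i - 1)) * X ^ (n - j + 1 - i) := by
  set m := n - j with hm_def
  have hm : 1 ≤ m := by omega
  clear_value m
  set Q : ℕ → K := fun i =>
    c' i * (c 0) ^ 2 - c' 0 * c 0 * c i - c' 1 * c (i - 1) * c 0
      + c' 0 * c 1 * c (i - 1) with hQ
  set S : K[X] := ∑ i ∈ range (m + 1), C (c i) * X ^ (m - i) with hS
  set S' : K[X] := ∑ i ∈ range (m + 2), C (c' i) * X ^ (m + 1 - i) with hS'
  set r : K[X] := C (γ' / (c 0) ^ 2) * ∑ i ∈ Finset.Icc 2 (m + 1),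
      C (Q i) * X ^ (m + 1 - i) with hr
  set a : K := γ' / c 0 * c' 0 with ha
  set b : K := γ' / c 0 * (c' 1 - c' 0 * c 1 / c 0) with hb
  set q : K[X] := C (γ' / (γ * c 0) * c' 0) * X
      + C (γ' / (γ * c 0) * (c' 1 - c' 0 * c 1 / c 0)) with hq
  -- express r as sum over range (m+2)
  have hr' : r = ∑ i ∈ range (m + 2),
      (if 2 ≤ i then C (γ' / (c 0) ^ 2 * Q i) * X ^ (m + 1 - i) else 0) := by
    rw [hr, Finset.mul_sum]
    rw [← Finset.sum_subset (s₁ := Finset.Icc 2 (m + 1)) (s₂ := range (m + 2))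
      (by intro i hi; simp only [Finset.mem_Icc] at hi; simp only [Finset.mem_range]; omega)
      (by intro i hi hni; simp only [Finset.mem_Icc, not_and, not_le] at hni
          simp only [Finset.mem_range] at hi
          have : ¬ 2 ≤ i := by by_contra h; exact absurd (hni h) (by omega)
          simp [this])]
    apply Finset.sum_congr rfl
    intro i hi
    simp only [Finset.mem_Icc] at hi
    rw [if_pos hi.1, ← mul_assoc, ← C_mul]
  -- X * S
  have hXS : X * S = ∑ i ∈ range (m + 2), C (c i) * X ^ (m + 1 - i) := by
    rw [Finset.sum_range_succ, hctop (m + 1) (by omega), map_zero, zero_mul, add_zero,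
      hS, Finset.mul_sum]
    apply Finset.sum_congr rfl
    intro i hi
    simp only [Finset.mem_range] at hi
    have : m + 1 - i = (m - i) + 1 := by omega
    rw [this, pow_succ]
    ring
  -- S with shifted index
  have hSshift : S = ∑ i ∈ range (m + 2),
      (if i = 0 then 0 else C (c (i - 1)) * X ^ (m + 1 - i)) := by
    rw [Finset.sum_range_succ' (fun i => if i = 0 then (0 : K[X]) else C (c (i - 1)) * X ^ (m + 1 - i)) (m + 1)]
    simp only [Nat.succ_ne_zero, ite_false, ite_true, if_true, if_false, reduceIte, add_zero,
      Nat.add_sub_cancel, Nat.succ_sub_succ_eq_sub, Nat.sub_zero]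
    exact hS
  -- main decomposition
  have key : C γ' * S' = r + (C γ * S) * q := by
    have hfq : (C γ * S) * q = C a * (X * S) + C b * S := by
      rw [hq, ha, hb]
      have h1 : γ * (γ' / (γ * c 0) * c' 0) = γ' / c 0 * c' 0 := by
        field_simp
      have h2 : γ * (γ' / (γ * c 0) * (c' 1 - c' 0 * c 1 / c 0))
          = γ' / c 0 * (c' 1 - c' 0 * c 1 / c 0) := by
        field_simp
      rw [← h1, ← h2]
      simp only [C_mul]
      ring
    rw [hfq, hr', hXS, hSshift, Finset.mul_sum, Finset.mul_sum, Finset.mul_sum,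
      ← Finset.sum_add_distrib, ← Finset.sum_add_distrib]
    apply Finset.sum_congr rfl
    intro i hi
    simp only [Finset.mem_range] at hi
    rcases Nat.lt_or_ge i 2 with h2 | h2
    · interval_cases i
      · simp only [if_neg (by omega : ¬ (2 : ℕ) ≤ 0), if_pos rfl, if_true, mul_zero, add_zero, zero_add,
          ← mul_assoc, ← C_mul]
        congr 2
        rw [ha]
        field_simp
      · simp only [if_neg (by omega : ¬ (2 : ℕ) ≤ 1), if_neg (one_ne_zero), zero_add,
          ← mul_assoc, ← C_mul, ← add_mul, ← C_add]
        congr 2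
        rw [ha, hb]
        field_simp
        ring
    · rw [if_pos h2, if_neg (by omega : i ≠ 0)]
      simp only [← mul_assoc, ← C_mul, ← add_mul, ← C_add]
      congr 2
      simp only [hQ, ha, hb]
      field_simp
      ring
  -- degrees
  have hdegS : degree S = (m : WithBot ℕ) := by
    apply degree_eq_of_le_of_coeff_ne_zero
    · apply le_trans (degree_sum_le _ _)
      apply Finset.sup_le
      intro i hi
      refine le_trans (degree_C_mul_X_pow_le _ _) ?_
      exact_mod_cast Nat.sub_le m i
    · rw [hS, finset_sum_coeff]
      rw [Finset.sum_eq_single 0]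
      · simp
        exact hc0
      · intro i hi hne
        simp only [Finset.mem_range] at hi
        rw [coeff_C_mul_X_pow, if_neg (by omega)]
      · intro h; simp at h
  have hdegf : degree (C γ * S) = (m : WithBot ℕ) := by
    rw [degree_C_mul hγ, hdegS]
  have hfne : C γ * S ≠ 0 := by
    intro h
    rw [h, degree_zero] at hdegf
    exact absurd hdegf.symm (by simp)
  have hdegr : degree r < (m : WithBot ℕ) := by
    rw [hr]
    apply lt_of_le_of_lt (degree_mul_le _ _)
    calc degree (C (γ' / c 0 ^ 2)) + degree (∑ i ∈ Finset.Icc 2 (m + 1), C (Q i) * X ^ (m + 1 - i))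
        ≤ 0 + ((m - 1 : ℕ) : WithBot ℕ) := by
          apply add_le_add degree_C_le
          apply le_trans (degree_sum_le _ _)
          apply Finset.sup_le
          intro i hi
          simp only [Finset.mem_Icc] at hi
          refine le_trans (degree_C_mul_X_pow_le _ _) ?_
          exact_mod_cast (by omega : m + 1 - i ≤ m - 1)
      _ = ((m - 1 : ℕ) : WithBot ℕ) := by rw [zero_add]
      _ < (m : WithBot ℕ) := by exact_mod_cast (by omega : m - 1 < m)
  -- compute the remainder
  have hlc : (C γ * S).leadingCoeff ≠ 0 := leadingCoeff_ne_zero.2 hfne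
  have hmod : (C γ' * S') % (C γ * S) = r := by
    rw [Polynomial.mod_def]
    have hmonic := monic_mul_leadingCoeff_inv hfne
    refine (div_modByMonic_unique (C (C γ * S).leadingCoeff * q) r hmonic ⟨?_, ?_⟩).2
    · rw [key]
      rw [add_right_inj]
      rw [mul_assoc, ← mul_assoc (C ((C γ * S).leadingCoeff)⁻¹), ← C_mul,
        inv_mul_cancel₀ hlc, C_1, one_mul]
    · rw [degree_mul_leadingCoeff_inv _ hfne, hdegf]
      exact hdegr
  rw [hmod, hr, neg_mul]
end

section
/- Identity (A): with the determinants c(m)_i as above and c(n)''_i defined as the determinant obtained from C(n+1)_{i-2} by deleting the (n-2)-th row and n-th column, one has c(n-1)_i·c(n) - c(n-1)_1·c(n)_{i-1} + c(n-1)·c(n)''_i = 0. This identity holds for arbitrary values of the entries b(j)_i (no quadratic relations are needed). -/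
/-- The shifted `(m-1)×(m-1)` Hankel-type matrix `C(m)_i` built from arbitrary entries `b`:
`(p,q)`-entry `b(min(p,q))_{p+q}` for `p ≤ m-2` (1-based), last row
`(b(1)_{m+i}, …, b(m-1)_{2m+i-2})`. -/
def bCMat {R : Type*} [CommRing R] (b : ℤ → ℤ → R) (m : ℕ) (i : ℤ) :
    Matrix (Fin (m - 1)) (Fin (m - 1)) R :=
  Matrix.of fun p q =>
    if p.1 = m - 2 then b ((q.1 : ℤ) + 1) ((m : ℤ) + i + q.1)
    else b ((min (p.1 + 1) (q.1 + 1) : ℕ) : ℤ) ((p.1 : ℤ) + q.1 + 2)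

/-- `c(m)_i = det C(m)_i`. -/
def bC {R : Type*} [CommRing R] (b : ℤ → ℤ → R) (m : ℕ) (i : ℤ) : R :=
  (bCMat b m i).det

namespace IdAAux

variable {R : Type*} [CommRing R]
set_option linter.unusedSectionVars false

/-- Rows: `W` (k rows), then `x`, then `y`. -/
def rowsF {k : ℕ} (W : Fin k → Fin (k+2) → R) (x y : Fin (k+2) → R) :
    Matrix (Fin (k+2)) (Fin (k+2)) R :=
  Matrix.of fun p q => if h : p.1 < k then W ⟨p.1, h⟩ q else if p.1 = k then x q else y q

variable {k : ℕ} (W : Fin k → Fin (k+2) → R) (x y z w : Fin (k+2) → R)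

lemma rowsF_lt (p : Fin (k+2)) (h : p.1 < k) (q : Fin (k+2)) :
    rowsF W x y p q = W ⟨p.1, h⟩ q := dif_pos h

lemma rowsF_k (p : Fin (k+2)) (h : p.1 = k) (q : Fin (k+2)) :
    rowsF W x y p q = x q := by
  simp only [rowsF, Matrix.of_apply]
  rw [dif_neg (by omega), if_pos h]

lemma rowsF_last (p : Fin (k+2)) (h : p.1 = k+1) (q : Fin (k+2)) :
    rowsF W x y p q = y q := by
  simp only [rowsF, Matrix.of_apply]
  rw [dif_neg (by omega), if_neg (by omega)]

/-- Rows: `W` (k rows), then `y`, `z`, `w`. -/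
def rowsV {k : ℕ} (W : Fin k → Fin (k+2) → R) (y z w : Fin (k+2) → R) :
    Fin (k+3) → Fin (k+2) → R :=
  fun j => if h : j.1 < k then W ⟨j.1, h⟩ else if j.1 = k then y else if j.1 = k+1 then z else w

lemma rowsV_lt (j : Fin (k+3)) (h : j.1 < k) : rowsV W y z w j = W ⟨j.1, h⟩ := dif_pos h

lemma rowsV_k (j : Fin (k+3)) (h : j.1 = k) : rowsV W y z w j = y := by
  simp only [rowsV]; rw [dif_neg (by omega), if_pos h]

lemma rowsV_k1 (j : Fin (k+3)) (h : j.1 = k+1) : rowsV W y z w j = z := by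
  simp only [rowsV]; rw [dif_neg (by omega), if_neg (by omega), if_pos h]

lemma rowsV_k2 (j : Fin (k+3)) (h : j.1 = k+2) : rowsV W y z w j = w := by
  simp only [rowsV]; rw [dif_neg (by omega), if_neg (by omega), if_neg (by omega)]

lemma val_succAbove' {n : ℕ} (pv : ℕ) (hp : pv < n+1) (i : Fin n) :
    ((⟨pv, hp⟩ : Fin (n+1)).succAbove i).1 = if i.1 < pv then i.1 else i.1 + 1 := by
  unfold Fin.succAbove
  split_ifs with h1 h2
  · rfl
  · exact absurd (by simpa [Fin.lt_def] using h1) h2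
  · exact absurd (by simpa [Fin.lt_def] using ‹i.1 < pv›) h1
  · rfl

/-- The minor of the `(k+3)×(k+2)` stack `rowsV` omitting row `j`. -/
def minorV {k : ℕ} (W : Fin k → Fin (k+2) → R) (y z w : Fin (k+2) → R) (j : Fin (k+3)) :
    Matrix (Fin (k+2)) (Fin (k+2)) R :=
  Matrix.of fun a l => rowsV W y z w (j.succAbove a) l

lemma minorV_at_k : minorV W y z w ⟨k, by omega⟩ = rowsF W z w := by
  ext a l
  have h2 := a.isLt
  have hsa := val_succAbove' k (by omega) a
  simp only [minorV, Matrix.of_apply]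
  by_cases ha : a.1 < k
  · rw [if_pos ha] at hsa
    rw [rowsV_lt _ _ _ _ _ (by omega), rowsF_lt _ _ _ _ ha]
    congr 1
    simp only [Fin.mk.injEq]
    omega
  · rw [if_neg ha] at hsa
    by_cases ha2 : a.1 = k
    · rw [rowsV_k1 _ _ _ _ _ (by omega), rowsF_k _ _ _ _ ha2]
    · rw [rowsV_k2 _ _ _ _ _ (by omega), rowsF_last _ _ _ _ (by omega)]

lemma minorV_at_k1 : minorV W y z w ⟨k+1, by omega⟩ = rowsF W y w := by
  ext a l
  have h2 := a.isLt
  have hsa := val_succAbove' (k+1) (by omega) a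
  simp only [minorV, Matrix.of_apply]
  by_cases ha : a.1 < k
  · rw [if_pos (by omega)] at hsa
    rw [rowsV_lt _ _ _ _ _ (by omega), rowsF_lt _ _ _ _ ha]
    congr 1
    simp only [Fin.mk.injEq]
    omega
  · by_cases ha2 : a.1 = k
    · rw [if_pos (by omega)] at hsa
      rw [rowsV_k _ _ _ _ _ (by omega), rowsF_k _ _ _ _ ha2]
    · rw [if_neg (by omega)] at hsa
      rw [rowsV_k2 _ _ _ _ _ (by omega), rowsF_last _ _ _ _ (by omega)]

lemma minorV_at_k2 : minorV W y z w ⟨k+2, by omega⟩ = rowsF W y z := by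
  ext a l
  have h2 := a.isLt
  have hsa := val_succAbove' (k+2) (by omega) a
  rw [if_pos (by omega)] at hsa
  simp only [minorV, Matrix.of_apply]
  by_cases ha : a.1 < k
  · rw [rowsV_lt _ _ _ _ _ (by omega), rowsF_lt _ _ _ _ ha]
    congr 1
    simp only [Fin.mk.injEq]
    omega
  · by_cases ha2 : a.1 = k
    · rw [rowsV_k _ _ _ _ _ (by omega), rowsF_k _ _ _ _ ha2]
    · rw [rowsV_k1 _ _ _ _ _ (by omega), rowsF_last _ _ _ _ (by omega)]


lemma det_updateRow_finsum {n' : Type*} [DecidableEq n'] [Fintype n'] {ι : Type*}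
    (M : Matrix n' n' R) (r : n') (s : Finset ι) (t : ι → R) (v : ι → n' → R) :
    (M.updateRow r (fun c => ∑ j ∈ s, t j * v j c)).det
      = ∑ j ∈ s, t j * (M.updateRow r (v j)).det := by
  classical
  induction s using Finset.induction with
  | empty =>
      rw [Finset.sum_empty]
      exact Matrix.det_eq_zero_of_row_eq_zero r (fun j => by simp)
  | insert a s ha ih =>
      have h1 : (fun c => ∑ j ∈ insert a s, t j * v j c)
          = (t a • v a) + (fun c => ∑ j ∈ s, t j * v j c) := by
        funext c
        simp [Finset.sum_insert ha, mul_comm]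
      rw [h1, Matrix.det_updateRow_add, Matrix.det_updateRow_smul, ih, Finset.sum_insert ha]


/-- The stack `rowsV` with its column `c` duplicated as an extra last column. -/
def NN {k : ℕ} (W : Fin k → Fin (k+2) → R) (y z w : Fin (k+2) → R) (c : Fin (k+2)) :
    Matrix (Fin (k+3)) (Fin (k+3)) R :=
  Matrix.of fun j l => if h : l.1 < k+2 then rowsV W y z w j ⟨l.1, h⟩ else rowsV W y z w j c

lemma key (c : Fin (k+2)) :
    (∑ j : Fin (k+3),
      ((-1 : R) ^ (j.1 + (k+2)) * (minorV W y z w j).det) * rowsV W y z w j c) = 0 := by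
  have h0 : (NN W y z w c).det = 0 := by
    refine Matrix.det_zero_of_column_eq (i := (⟨c.1, by omega⟩ : Fin (k+3)))
      (j := Fin.last (k+2)) ?_ ?_
    · intro hh
      have := congrArg Fin.val hh
      simp [Fin.val_last] at this
      omega
    · intro r
      simp only [NN, Matrix.of_apply]
      rw [dif_pos (show ((⟨c.1, by omega⟩ : Fin (k+3))).1 < k+2 from c.2),
        dif_neg (by simp [Fin.val_last])]
  have hexp := Matrix.det_succ_column (NN W y z w c) (Fin.last (k+2))
  rw [h0] at hexp
  have hterm : ∀ j : Fin (k+3),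
      (-1 : R) ^ (j.1 + ((Fin.last (k+2)) : Fin (k+3)).1) * (NN W y z w c) j (Fin.last (k+2))
          * ((NN W y z w c).submatrix j.succAbove (Fin.last (k+2)).succAbove).det
        = ((-1 : R) ^ (j.1 + (k+2)) * (minorV W y z w j).det) * rowsV W y z w j c := by
    intro j
    have e1 : (NN W y z w c) j (Fin.last (k+2)) = rowsV W y z w j c := by
      simp only [NN, Matrix.of_apply]
      rw [dif_neg (by simp [Fin.val_last])]
    have e2 : (NN W y z w c).submatrix j.succAbove (Fin.last (k+2)).succAbove
        = minorV W y z w j := by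
      rw [Fin.succAbove_last]
      ext a l
      simp only [Matrix.submatrix_apply, NN, Matrix.of_apply, minorV]
      rw [dif_pos (show (Fin.castSucc l).1 < k+2 from l.2)]
      congr 1
    rw [e1, e2, Fin.val_last]
    ring
  calc (∑ j : Fin (k+3), ((-1 : R) ^ (j.1 + (k+2)) * (minorV W y z w j).det) * rowsV W y z w j c)
      = ∑ j : Fin (k+3),
        (-1 : R) ^ (j.1 + ((Fin.last (k+2)) : Fin (k+3)).1) * (NN W y z w c) j (Fin.last (k+2))
          * ((NN W y z w c).submatrix j.succAbove (Fin.last (k+2)).succAbove).det :=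
        Finset.sum_congr rfl fun j _ => (hterm j).symm
    _ = 0 := hexp.symm



lemma rowsF_updateRow (u : Fin (k+2) → R) :
    rowsF W x u = (rowsF W x y).updateRow (Fin.last (k+1)) u := by
  ext p q
  rw [Matrix.updateRow_apply]
  by_cases hp : p = Fin.last (k+1)
  · rw [if_pos hp, rowsF_last W x u p (by rw [hp, Fin.val_last])]
  · rw [if_neg hp]
    have hp' : p.1 ≠ k+1 := fun h => hp (Fin.ext (by rw [h, Fin.val_last]))
    have hlt := p.isLt
    by_cases h1 : p.1 < k
    · rw [rowsF_lt W x u p h1, rowsF_lt W x y p h1]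
    · rw [rowsF_k W x u p (by omega), rowsF_k W x y p (by omega)]

/-- Summand of the Laplace-type expansion. -/
def Gfun {k : ℕ} (W : Fin k → Fin (k+2) → R) (x y z w : Fin (k+2) → R) (j : Fin (k+3)) : R :=
  ((-1 : R) ^ (j.1 + (k+2)) * (minorV W y z w j).det) * (rowsF W x (rowsV W y z w j)).det

lemma lin0 : (0 : R) = ∑ j : Fin (k+3), Gfun W x y z w j := by
  have hu : (fun c : Fin (k+2) =>
      ∑ j : Fin (k+3), ((-1 : R) ^ (j.1 + (k+2)) * (minorV W y z w j).det) * rowsV W y z w j c)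
      = fun _ => (0 : R) := funext (key W y z w)
  have lin : (rowsF W x (fun c : Fin (k+2) =>
        ∑ j : Fin (k+3),
          ((-1 : R) ^ (j.1 + (k+2)) * (minorV W y z w j).det) * rowsV W y z w j c)).det
      = ∑ j : Fin (k+3), Gfun W x y z w j := by
    rw [rowsF_updateRow W x y, det_updateRow_finsum]
    exact Finset.sum_congr rfl fun j _ => by
      simp only [Gfun]
      rw [← rowsF_updateRow W x y]
  rw [hu] at lin
  have hz : (rowsF W x (fun _ => (0 : R))).det = 0 :=
    Matrix.det_eq_zero_of_row_eq_zero (Fin.last (k+1))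
      (fun q => rowsF_last W x (fun _ => (0 : R)) _ (Fin.val_last _) q)
  rw [hz] at lin
  exact lin

lemma Gzero (j : Fin (k+3)) (h : j.1 < k) : Gfun W x y z w j = 0 := by
  have hvj : rowsV W y z w j = W ⟨j.1, h⟩ := rowsV_lt W y z w j h
  have hdup : (rowsF W x (W ⟨j.1, h⟩)).det = 0 := by
    refine Matrix.det_zero_of_row_eq (i := (⟨j.1, by omega⟩ : Fin (k+2)))
      (j := Fin.last (k+1)) ?_ ?_
    · intro hh
      have := congrArg Fin.val hh
      simp [Fin.val_last] at this
      omega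
    · funext q
      rw [rowsF_lt W x (W ⟨j.1, h⟩) ⟨j.1, by omega⟩ h q,
        rowsF_last W x (W ⟨j.1, h⟩) (Fin.last (k+1)) (Fin.val_last _) q]
  simp only [Gfun]
  rw [hvj, hdup, mul_zero]

lemma Gval_k (h : k < k+3) : Gfun W x y z w ⟨k, h⟩ = (rowsF W z w).det * (rowsF W x y).det := by
  simp only [Gfun]
  rw [rowsV_k W y z w _ rfl, minorV_at_k]
  have s1 : ((-1 : R)) ^ (((⟨k, h⟩ : Fin (k+3))).1 + (k+2)) = 1 := by
    rw [show ((⟨k, h⟩ : Fin (k+3))).1 + (k+2) = 2*(k+1) from by simp; omega, pow_mul]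
    norm_num
  rw [s1, one_mul]

lemma Gval_k1 (h : k+1 < k+3) :
    Gfun W x y z w ⟨k+1, h⟩ = -((rowsF W y w).det * (rowsF W x z).det) := by
  simp only [Gfun]
  rw [rowsV_k1 W y z w _ rfl, minorV_at_k1]
  have s2 : ((-1 : R)) ^ (((⟨k+1, h⟩ : Fin (k+3))).1 + (k+2)) = -1 := by
    rw [show ((⟨k+1, h⟩ : Fin (k+3))).1 + (k+2) = 2*(k+1)+1 from by simp; omega, pow_succ, pow_mul]
    norm_num
  rw [s2]
  ring

lemma Gval_k2 (h : k+2 < k+3) :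
    Gfun W x y z w ⟨k+2, h⟩ = (rowsF W y z).det * (rowsF W x w).det := by
  simp only [Gfun]
  rw [rowsV_k2 W y z w _ rfl, minorV_at_k2]
  have s3 : ((-1 : R)) ^ (((⟨k+2, h⟩ : Fin (k+3))).1 + (k+2)) = 1 := by
    rw [show ((⟨k+2, h⟩ : Fin (k+3))).1 + (k+2) = 2*(k+2) from by simp; omega, pow_mul]
    norm_num
  rw [s3, one_mul]

set_option maxHeartbeats 2000000 in
lemma plucker :
    (rowsF W x y).det * (rowsF W z w).det - (rowsF W x z).det * (rowsF W y w).det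
      + (rowsF W x w).det * (rowsF W y z).det = 0 := by
  have lin := lin0 W x y z w
  simp only [Fin.sum_univ_castSucc] at lin
  have hc2 : (Fin.castSucc (Fin.castSucc (Fin.last k)) : Fin (k+3)) = ⟨k, by omega⟩ :=
    Fin.ext (by simp)
  have hc1 : (Fin.castSucc (Fin.last (k+1)) : Fin (k+3)) = ⟨k+1, by omega⟩ :=
    Fin.ext (by simp)
  have hc0 : (Fin.last (k+2) : Fin (k+3)) = ⟨k+2, by omega⟩ := Fin.ext (by simp)
  simp only [hc2, hc1, hc0] at lin
  have hsum0 : (∑ j : Fin k,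
      Gfun W x y z w (Fin.castSucc (Fin.castSucc (Fin.castSucc j)))) = 0 :=
    Finset.sum_eq_zero fun j _ => Gzero W x y z w _ (by simp [j.isLt])
  rw [hsum0] at lin
  rw [zero_add] at lin
  rw [Gval_k] at lin
  rw [Gval_k1] at lin
  rw [Gval_k2] at lin
  linear_combination -lin


section Application

variable (b : ℤ → ℤ → R) (m : ℕ)

/-- The common Hankel rows. -/
def Wm : Fin m → Fin (m+2) → R :=
  fun p q => b ((min (p.1 + 1) (q.1 + 1) : ℕ) : ℤ) ((p.1 : ℤ) + q.1 + 2)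

/-- The next Hankel row. -/
def xm : Fin (m+2) → R :=
  fun q => b ((min (m + 1) (q.1 + 1) : ℕ) : ℤ) ((m : ℤ) + q.1 + 2)

/-- The moving last rows. -/
def Lm (i : ℤ) : Fin (m+2) → R := fun q => b ((q.1 : ℤ) + 1) ((m : ℤ) + 3 + i + q.1)

/-- Last standard basis vector. -/
def ee : Fin (m+2) → R := fun q => if q.1 = m + 1 then 1 else 0

lemma bCMat_big (j : ℤ) : bCMat b (m+3) j = rowsF (Wm b m) (xm b m) (Lm b m j) := by
  ext p q
  have hp := p.isLt
  have hq := q.isLt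
  simp only [bCMat, Matrix.of_apply]
  by_cases h1 : p.1 < m
  · rw [if_neg (by omega), rowsF_lt _ _ _ p h1 q]
    simp only [Wm, Fin.val_mk]
  · by_cases h2 : p.1 = m
    · rw [if_neg (by omega), rowsF_k _ _ _ p h2 q]
      simp only [xm]
      congr 1 <;> push_cast <;> omega
    · have h3 : p.1 = m + 1 := by omega
      rw [if_pos (by omega), rowsF_last _ _ _ p h3 q]
      simp only [Lm]
      congr 1 <;> push_cast <;> omega

lemma bCMat_sub (i : ℤ) (h1 : m < m+3) (h2 : m+2 < m+3) :
    (bCMat b (m+4) (i-2)).submatrix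
        (Fin.succAbove (⟨m, h1⟩ : Fin (m+3))) (Fin.succAbove (⟨m+2, h2⟩ : Fin (m+3)))
      = rowsF (Wm b m) (Lm b m 0) (Lm b m (i-1)) := by
  have hlast : (⟨m+2, h2⟩ : Fin (m+3)) = Fin.last (m+2) := rfl
  ext p q
  have hp := p.isLt
  have hq := q.isLt
  have hr := val_succAbove' m h1 p
  simp only [Matrix.submatrix_apply, hlast, Fin.succAbove_last, bCMat, Matrix.of_apply,
    Fin.coe_castSucc]
  by_cases hp1 : p.1 < m
  · rw [if_pos hp1] at hr
    rw [if_neg (by omega), rowsF_lt _ _ _ p hp1 q]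
    simp only [Wm, Fin.val_mk]
    congr 1 <;> push_cast <;> omega
  · rw [if_neg hp1] at hr
    by_cases hp2 : p.1 = m
    · rw [if_neg (by omega), rowsF_k _ _ _ p hp2 q]
      simp only [Lm]
      congr 1 <;> push_cast <;> omega
    · have hp3 : p.1 = m + 1 := by omega
      rw [if_pos (by omega), rowsF_last _ _ _ p hp3 q]
      simp only [Lm]
      congr 1 <;> push_cast <;> omega

lemma det_rowsF_ee (v : Fin (m+2) → R) :
    (rowsF (Wm b m) v (ee m)).det
      = ((rowsF (Wm b m) v (ee m)).submatrix Fin.castSucc Fin.castSucc).det := by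
  rw [Matrix.det_succ_row (rowsF (Wm b m) v (ee m)) (Fin.last (m+1))]
  rw [Finset.sum_eq_single (Fin.last (m+1))]
  · have h1 : rowsF (Wm b m) v (ee m) (Fin.last (m+1)) (Fin.last (m+1)) = 1 := by
      rw [rowsF_last _ _ _ _ (Fin.val_last _)]
      simp [ee]
    rw [h1, Fin.succAbove_last, mul_one]
    have hs : ((-1 : R)) ^ ((Fin.last (m+1) : Fin (m+2)).1 + (Fin.last (m+1) : Fin (m+2)).1)
        = 1 := by
      rw [show (Fin.last (m+1) : Fin (m+2)).1 + (Fin.last (m+1) : Fin (m+2)).1 = 2*(m+1) from by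
        simp [Fin.val_last]; ring, pow_mul]
      norm_num
    rw [hs, one_mul]
  · intro j _ hj
    have h0 : rowsF (Wm b m) v (ee m) (Fin.last (m+1)) j = 0 := by
      rw [rowsF_last _ _ _ _ (Fin.val_last _)]
      have : j.1 ≠ m+1 := fun h => hj (Fin.ext (by rw [h, Fin.val_last]))
      simp [ee, this]
    rw [h0, mul_zero, zero_mul]
  · intro h
    exact absurd (Finset.mem_univ _) h

lemma minor_L (j : ℤ) :
    (rowsF (Wm b m) (Lm b m (j-1)) (ee m)).submatrix Fin.castSucc Fin.castSucc
      = bCMat b (m+2) j := by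
  ext p q
  have hp := p.isLt
  have hq := q.isLt
  simp only [Matrix.submatrix_apply, bCMat, Matrix.of_apply, Fin.coe_castSucc]
  by_cases h1 : p.1 < m
  · rw [rowsF_lt _ _ _ _ (show (Fin.castSucc p).1 < m by simpa using h1), if_neg (by omega)]
    simp only [Wm, Fin.val_mk, Fin.coe_castSucc]
  · have h2 : p.1 = m := by omega
    rw [rowsF_k _ _ _ _ (show (Fin.castSucc p).1 = m by simpa using h2), if_pos (by omega)]
    simp only [Lm, Fin.coe_castSucc]
    congr 1 <;> push_cast <;> omega

lemma minor_x :
    (rowsF (Wm b m) (xm b m) (ee m)).submatrix Fin.castSucc Fin.castSucc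
      = bCMat b (m+2) 0 := by
  ext p q
  have hp := p.isLt
  have hq := q.isLt
  simp only [Matrix.submatrix_apply, bCMat, Matrix.of_apply, Fin.coe_castSucc]
  by_cases h1 : p.1 < m
  · rw [rowsF_lt _ _ _ _ (show (Fin.castSucc p).1 < m by simpa using h1), if_neg (by omega)]
    simp only [Wm, Fin.val_mk, Fin.coe_castSucc]
  · have h2 : p.1 = m := by omega
    rw [rowsF_k _ _ _ _ (show (Fin.castSucc p).1 = m by simpa using h2), if_pos (by omega)]
    simp only [xm, Fin.coe_castSucc]
    congr 1 <;> push_cast <;> omega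

lemma bC_small (j : ℤ) :
    (bCMat b (m+2) j).det = (rowsF (Wm b m) (Lm b m (j-1)) (ee m)).det := by
  rw [det_rowsF_ee, minor_L]

lemma bC_small_zero :
    (bCMat b (m+2) 0).det = (rowsF (Wm b m) (xm b m) (ee m)).det := by
  rw [det_rowsF_ee, minor_x]

end Application

end IdAAux

/-- Identity (A): for arbitrary entries `b(j)_i` of a commutative ring (no quadratic
relations needed), for any `n = m + 3 ≥ 3`,
`c(n-1)_i·c(n) - c(n-1)₁·c(n)_{i-1} + c(n-1)·c(n)''_i = 0`, where
`c(n)''_i` is the determinant of `C(n+1)_{i-2}` with its `(n-2)`-th row and `n`-th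
column removed (1-based; below `n - 3` and `n - 1` in 0-based indexing). -/
theorem identity_A {R : Type*} [CommRing R] (b : ℤ → ℤ → R) (m : ℕ) (i : ℤ) :
    letI n : ℕ := m + 3
    bC b (n - 1) i * bC b n 0 - bC b (n - 1) 1 * bC b n (i - 1)
      + bC b (n - 1) 0 *
          ((bCMat b (n + 1) (i - 2)).submatrix
            (Fin.succAbove (⟨n - 3, by omega⟩ : Fin n))
            (Fin.succAbove (⟨n - 1, by omega⟩ : Fin n))).det = 0 := by
  show bC b (m+2) i * bC b (m+3) 0 - bC b (m+2) 1 * bC b (m+3) (i - 1)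
      + bC b (m+2) 0 *
          ((bCMat b (m+4) (i - 2)).submatrix
            (Fin.succAbove (⟨m, by omega⟩ : Fin (m+3)))
            (Fin.succAbove (⟨m+2, by omega⟩ : Fin (m+3)))).det = 0
  simp only [bC]
  rw [IdAAux.bCMat_sub b m i (by omega) (by omega), IdAAux.bCMat_big b m 0,
    IdAAux.bCMat_big b m (i-1), IdAAux.bC_small b m i, IdAAux.bC_small b m 1,
    IdAAux.bC_small_zero b m]
  rw [show (1:ℤ) - 1 = 0 from by norm_num]
  have hp := IdAAux.plucker (IdAAux.Wm b m) (IdAAux.xm b m) (IdAAux.Lm b m 0)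
    (IdAAux.Lm b m (i-1)) (IdAAux.ee m)
  linear_combination hp
end
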